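/- Suppose Θ, Ξ ∈ A^{⊗(m+1)} (for an algebra A with coproduct Δ and a central element Λ ∈ A such that Λb ≠ 1 for all b ∈ A and (1⊗ε)Δ = id) satisfy (Θ−Ξ)⊗1 = (1/(q+q⁻¹)) · (1^{⊗(m+1)}⊗Λ) · (1^{⊗m}⊗Δ)(Θ−Ξ) in A^{⊗(m+2)}. Then Θ = Ξ. -/

import Mathlib

open TensorProduct

universe u

variable (𝕜 : Type u) [Field 𝕜] (A : Type u) [Ring A] [Algebra 𝕜 A]

/-- `TPow 𝕜 A m` is the `(m+1)`-fold tensor power `A^{⊗(m+1)}`, as a `𝕜`-algebra. -/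
noncomputable def TPow : ℕ → AlgCat.{u} 𝕜
  | 0 => AlgCat.of 𝕜 A
  | (m + 1) => AlgCat.of 𝕜 ((TPow m) ⊗[𝕜] A)

/-- The map `1^{⊗m} ⊗ Δ : A^{⊗(m+1)} → A^{⊗(m+2)}`, applying the coproduct `Δ` to the
last tensor factor. -/
noncomputable def lastDelta (Δ : A →ₗ[𝕜] A ⊗[𝕜] A) :
    (m : ℕ) → (TPow 𝕜 A m →ₗ[𝕜] (TPow 𝕜 A m) ⊗[𝕜] A)
  | 0 => Δ
  | (m + 1) =>
      (TensorProduct.assoc 𝕜 (TPow 𝕜 A m) A A).symm.toLinearMap ∘ₗ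
        TensorProduct.map (LinearMap.id : TPow 𝕜 A m →ₗ[𝕜] TPow 𝕜 A m) Δ

section

variable {𝕜 A} {M : Type*} [AddCommGroup M] [Module 𝕜 M]

theorem one_tmul_mul_eq_lTensor_mulLeft {R : Type*} [Ring R] [Algebra 𝕜 R] (b : A)
    (x : R ⊗[𝕜] A) : ((1 : R) ⊗ₜ b) * x = (LinearMap.mulLeft 𝕜 b).lTensor R x := by
  induction x using TensorProduct.induction_on with
  | zero => simp
  | tmul r a => simp [Algebra.TensorProduct.tmul_mul_tmul]
  | add x y hx hy => simp only [mul_add, map_add, hx, hy]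

theorem lid_rTensor_lTensor_mulLeft (f : Module.Dual 𝕜 M) (b : A) (y : M ⊗[𝕜] A) :
    TensorProduct.lid 𝕜 A (f.rTensor A ((LinearMap.mulLeft 𝕜 b).lTensor M y)) =
      b * TensorProduct.lid 𝕜 A (f.rTensor A y) := by
  induction y using TensorProduct.induction_on with
  | zero => simp
  | tmul x a => simp
  | add y z hy hz => simp only [map_add, mul_add, hy, hz]

/-- Slicing with a functional `f` on `M` turns `a ⊗ 1 = (1 ⊗ Λ) y` into `f a • 1 = Λ * b`,
so `f a ≠ 0` would make `Λ` right-invertible. -/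
theorem eq_zero_of_tmul_one_eq_lTensor_mulLeft {Λ : A} (hΛ : ∀ b : A, Λ * b ≠ 1) {a : M}
    {y : M ⊗[𝕜] A} (h : a ⊗ₜ (1 : A) = (LinearMap.mulLeft 𝕜 Λ).lTensor M y) : a = 0 := by
  refine (Module.forall_dual_apply_eq_zero_iff 𝕜 a).mp fun f => ?_
  by_contra hfa
  have hslice : f a • (1 : A) = Λ * TensorProduct.lid 𝕜 A (f.rTensor A y) := by
    simpa [lid_rTensor_lTensor_mulLeft] using
      congrArg (fun z => TensorProduct.lid 𝕜 A (f.rTensor A z)) h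
  refine hΛ ((f a)⁻¹ • TensorProduct.lid 𝕜 A (f.rTensor A y)) ?_
  rw [mul_smul_comm, ← hslice, smul_smul, inv_mul_cancel₀ hfa, one_smul]

end

theorem eq_of_tensor_identity (q : 𝕜)
    (Δ : A →ₐ[𝕜] A ⊗[𝕜] A)
    (Λ : A) (hΛ : ∀ b : A, Λ * b ≠ 1)
    (m : ℕ) (Θ Ξ : TPow 𝕜 A m)
    (heq : (Θ - Ξ) ⊗ₜ (1 : A) =
      (q + q⁻¹)⁻¹ •
        (((1 : TPow 𝕜 A m) ⊗ₜ Λ) * (lastDelta 𝕜 A Δ.toLinearMap m (Θ - Ξ)))) :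
    Θ = Ξ := by
  rw [one_tmul_mul_eq_lTensor_mulLeft, ← map_smul] at heq
  exact sub_eq_zero.mp (eq_zero_of_tmul_one_eq_lTensor_mulLeft hΛ heq)
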